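/- arXiv:math/0108102 — 4 statements merged into one kernel-verified Lean document; each statement's English description precedes it below -/
import Mathlib

section
/- For all n, r ∈ ℕ there is N(n, r) ∈ ℕ such that for every r' ≤ r, every k ∈ ℕ, and every completely positive map φ : ℂ^k → M_{r'} of strict order at most n, the element φ(e_i) is nonzero for at most N(n, r) of the canonical minimal projections e_i of ℂ^k. One may take N(n,r) = (n+1)·|Λ| where Λ is a finite subcover of the sphere S^{2r-1} by sets U_ξ = {η : |⟨ξ,η⟩| > 1/√2}. -/
/-!
For each `i` with `φ(e_i) ≠ 0` pick a unit vector `η_i` in the range of `φ(e_i)`. The matrices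
`φ(e_i)` are Hermitian, so `φ(e_i) φ(e_j) = 0` forces `η_i ⊥ η_j`. Cover the unit sphere of
`ℂ^{r'}` by finitely many balls of radius `1/2`: orthogonal unit vectors never lie in a common
such ball, so by the strict order condition each ball contains at most `n + 1` of the `η_i`.
-/

open scoped ComplexOrder InnerProductSpace
open Metric Matrix

/-- For `φ : ℂ^k → M_r` the paper's condition is the case `R i j ↔ φ(e_i) φ(e_j) = 0`. -/
def HasStrictOrderAtMost {α : Type*} (R : α → α → Prop) (n : ℕ) : Prop :=
  ∀ g : Fin (n + 2) → α, Function.Injective g → ∃ j j', j ≠ j' ∧ R (g j) (g j')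

theorem HasStrictOrderAtMost.card_le_mul_card {α β : Type*} [DecidableEq β]
    {R : α → α → Prop} {n : ℕ} (hR : HasStrictOrderAtMost R n) {T : Finset α} {Λ : Finset β}
    {c : α → β} (hc : ∀ i ∈ T, c i ∈ Λ) (hcR : ∀ i ∈ T, ∀ j ∈ T, c i = c j → ¬ R i j) :
    T.card ≤ (n + 1) * Λ.card := by
  refine Finset.card_le_mul_card_image_of_maps_to hc (n + 1) fun b _ => ?_
  set F := T.filter (c · = b)
  by_contra! hF
  let g : Fin (n + 2) → α := fun j => (F.equivFin.symm (Fin.castLE hF j) : α)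
  have hg : Function.Injective g :=
    Subtype.coe_injective.comp (F.equivFin.symm.injective.comp (Fin.castLE_injective hF))
  have hgF : ∀ j, g j ∈ T ∧ c (g j) = b := fun j => Finset.mem_filter.1 (F.equivFin.symm _).2
  obtain ⟨j, j', -, hjj'⟩ := hR g hg
  exact hcR _ (hgF j).1 _ (hgF j').1 ((hgF j).2.trans (hgF j').2.symm) hjj'

theorem exists_finset_sphere_subset_iUnion_ball (E : Type*) [NormedAddCommGroup E]
    [ProperSpace E] : ∃ Λ : Finset E, sphere (0 : E) 1 ⊆ ⋃ ξ ∈ Λ, ball ξ (1 / 2) := by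
  obtain ⟨Λ, -, hΛ⟩ := (isCompact_sphere (0 : E) 1).elim_nhds_subcover (fun ξ => ball ξ (1 / 2))
    fun ξ _ => ball_mem_nhds ξ one_half_pos
  exact ⟨Λ, hΛ⟩

/-- Orthogonal unit vectors are at distance `√2`, so they never share a ball of radius `1/2`. -/
theorem inner_ne_zero_of_mem_ball {𝕜 E : Type*} [RCLike 𝕜] [NormedAddCommGroup E]
    [InnerProductSpace 𝕜 E] {ξ x y : E} (hx : ‖x‖ = 1) (hy : ‖y‖ = 1)
    (hxξ : x ∈ ball ξ (1 / 2)) (hyξ : y ∈ ball ξ (1 / 2)) : ⟪x, y⟫_𝕜 ≠ 0 := by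
  intro hxy
  have hdist : ‖x - y‖ < 1 := by
    rw [← dist_eq_norm]
    linarith [dist_triangle_right x y ξ, mem_ball.1 hxξ, mem_ball.1 hyξ]
  have hsq : ‖x - y‖ ^ 2 = 2 := by
    rw [@norm_sub_sq 𝕜, hxy, hx, hy]
    norm_num
  nlinarith [norm_nonneg (x - y)]

theorem HasStrictOrderAtMost.card_le_of_unit_vectors {𝕜 E α : Type*} [RCLike 𝕜]
    [NormedAddCommGroup E] [InnerProductSpace 𝕜 E] {R : α → α → Prop} {n : ℕ}
    (hR : HasStrictOrderAtMost R n) {Λ : Finset E}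
    (hΛ : sphere (0 : E) 1 ⊆ ⋃ ξ ∈ Λ, ball ξ (1 / 2)) {T : Finset α} {η : α → E}
    (hη : ∀ i ∈ T, ‖η i‖ = 1) (hRη : ∀ i ∈ T, ∀ j ∈ T, R i j → ⟪η i, η j⟫_𝕜 = 0) :
    T.card ≤ (n + 1) * Λ.card := by
  classical
  have hcover : ∀ i, ∃ ξ, i ∈ T → ξ ∈ Λ ∧ η i ∈ ball ξ (1 / 2) := fun i => by
    by_cases hi : i ∈ T
    · obtain ⟨ξ, hξ, hηξ⟩ := Set.mem_iUnion₂.1 (hΛ (mem_sphere_zero_iff_norm.2 (hη i hi)))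
      exact ⟨ξ, fun _ => ⟨hξ, hηξ⟩⟩
    · exact ⟨0, fun h => absurd h hi⟩
  choose c hc using hcover
  refine hR.card_le_mul_card (fun i hi => (hc i hi).1) fun i hi j hj hij hRij => ?_
  refine inner_ne_zero_of_mem_ball (hη i hi) (hη j hj) (hc i hi).2 ?_ (hRη i hi j hj hRij)
  exact hij ▸ (hc j hj).2

theorem Matrix.IsHermitian.inner_toEuclideanLin_eq_zero {𝕜 m : Type*} [RCLike 𝕜] [Fintype m]
    [DecidableEq m] {A B : Matrix m m 𝕜} (hA : A.IsHermitian) (hAB : A * B = 0)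
    (u v : EuclideanSpace 𝕜 m) : ⟪toEuclideanLin A u, toEuclideanLin B v⟫_𝕜 = 0 := by
  rw [isSymmetric_toEuclideanLin_iff.2 hA, ← LinearMap.comp_apply, ← toLpLin_mul_same, hAB]
  simp

theorem Matrix.exists_norm_toEuclideanLin_eq_one {𝕜 m : Type*} [RCLike 𝕜] [Fintype m]
    [DecidableEq m] {A : Matrix m m 𝕜} (hA : A ≠ 0) :
    ∃ v : EuclideanSpace 𝕜 m, ‖toEuclideanLin A v‖ = 1 := by
  obtain ⟨v, hv⟩ : ∃ v, toEuclideanLin A v ≠ 0 := by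
    by_contra! h
    exact hA (toEuclideanLin.injective (LinearMap.ext fun v => by simp [h v]))
  exact ⟨(‖toEuclideanLin A v‖⁻¹ : 𝕜) • v, by rw [map_smul, norm_smul_inv_norm hv]⟩

/-- For all `n, r` there is `N(n,r)` such that for every `r' ≤ r`, every `k`, and every
positive (hence completely positive) linear map `φ : ℂ^k → M_{r'}` of strict order at most
`n`, the image `φ(e_i)` of a canonical minimal projection `e_i` of `ℂ^k` is nonzero for at
most `N(n,r)` indices `i`. -/
theorem stmt2 (n r : ℕ) :
    ∃ N : ℕ, ∀ (r' k : ℕ), r' ≤ r →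
      ∀ φ : (Fin k → ℂ) →ₗ[ℂ] Matrix (Fin r') (Fin r') ℂ,
        (∀ x : Fin k → ℂ, (∀ i, 0 ≤ x i) → (φ x).PosSemidef) →
        (∀ g : Fin (n + 2) → Fin k, Function.Injective g →
          ∃ j j', j ≠ j' ∧ φ (Pi.single (g j) 1) * φ (Pi.single (g j') 1) = 0) →
        {i : Fin k | φ (Pi.single i 1) ≠ 0}.ncard ≤ N := by
  classical
  choose Λ hΛ using fun m => exists_finset_sphere_subset_iUnion_ball (EuclideanSpace ℂ (Fin m))
  refine ⟨(n + 1) * (Finset.range (r + 1)).sup fun m => (Λ m).card, ?_⟩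
  intro r' k hr' φ hpos horder
  have hherm (i : Fin k) : (φ (Pi.single i 1)).IsHermitian :=
    (hpos _ (Pi.single_nonneg.2 zero_le_one)).isHermitian
  have hunit (i : Fin k) :
      ∃ v, φ (Pi.single i 1) ≠ 0 → ‖toEuclideanLin (φ (Pi.single i 1)) v‖ = 1 := by
    by_cases hi : φ (Pi.single i 1) = 0
    · exact ⟨0, fun h => absurd hi h⟩
    · obtain ⟨v, hv⟩ := exists_norm_toEuclideanLin_eq_one hi
      exact ⟨v, fun _ => hv⟩
  choose v hv using hunit
  rw [Set.ncard_eq_toFinset_card']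
  calc {i : Fin k | φ (Pi.single i 1) ≠ 0}.toFinset.card ≤ (n + 1) * (Λ r').card :=
        HasStrictOrderAtMost.card_le_of_unit_vectors
          (R := fun i j => φ (Pi.single i 1) * φ (Pi.single j 1) = 0) horder (hΛ r')
          (η := fun i => toEuclideanLin (φ (Pi.single i 1)) (v i))
          (fun i hi => hv i (Set.mem_toFinset.1 hi))
          fun i _ j _ hij => (hherm i).inner_toEuclideanLin_eq_zero hij _ _
    _ ≤ _ := Nat.mul_le_mul_left _ <|
        Finset.le_sup (f := fun m => (Λ m).card) (Finset.mem_range.2 (Nat.lt_succ_of_le hr'))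
end

section
/- Let φ : F → A be a positive contraction from a finite-dimensional C*-algebra F = M_{r_1} ⊕ ⋯ ⊕ M_{r_s} to a C*-algebra A, and let ι : ℂ^s → F be the canonical unital embedding onto the center. Then ord(φ ∘ ι) ≤ ord(φ). -/
/-!
The minimal projections of `ℂ^s` are the coordinate projections, so `ι` sends `n + 2` orthogonal
ones to distinct block units `1_{k_j}`. Suppose all products `φ(1_{k_i}) φ(1_{k_j})` are nonzero.
Expanding `1 = ∑ e_aa`, for each pair some product `φ(e_aa) φ(e_bb)` is nonzero; after a real
functional, `φ(v vᴴ) φ(u uᴴ)` is a polynomial in the entries of real vectors `v`, `u` that is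
nonzero at `(e_a, e_b)`. Finitely many nonzero real polynomials have a common non-root, which gives
rank-one projections `v_j v_jᴴ / ‖v_j‖²` under the `1_{k_j}` whose images pairwise do not
annihilate each other, contradicting `ord φ ≤ n`.
-/
open scoped ComplexOrder

/-- `p` is a minimal projection in the `ℂ`-algebra `B`: a nonzero self-adjoint idempotent
compressing `B` to `ℂ·p`. -/
def IsMinProj {B : Type*} [Ring B] [StarRing B] [Module ℂ B] (p : B) : Prop :=
  p ≠ 0 ∧ p * p = p ∧ star p = p ∧ ∀ x : B, ∃ c : ℂ, p * x * p = c • p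

/-- A map `ψ` out of a `ℂ`-algebra `B` has (strict) order at most `n`:
for every family of `n + 2` mutually orthogonal minimal projections of `B`, some pair of
images is orthogonal. -/
def OrdLe {B A : Type*} [Ring B] [StarRing B] [Module ℂ B] [MulZeroClass A]
    (ψ : B → A) (n : ℕ) : Prop :=
  ∀ e : Fin (n + 2) → B, (∀ j, IsMinProj (e j)) →
    (∀ j j', j ≠ j' → e j * e j' = 0) →
    ∃ j j', j ≠ j' ∧ ψ (e j) * ψ (e j') = 0

open Matrix

theorem IsMinProj.exists_eq_pi_single {ι : Type*} [DecidableEq ι] {p : ι → ℂ}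
    (hp : IsMinProj p) : ∃ k, p = Pi.single k 1 := by
  obtain ⟨hne, hidem, -, hcomp⟩ := hp
  obtain ⟨k, hk⟩ : ∃ k, p k ≠ 0 := Function.ne_iff.1 hne
  have hk1 : p k = 1 := (mul_eq_right₀ hk).1 (congrFun hidem k)
  obtain ⟨c, hc⟩ := hcomp (Pi.single k 1)
  have hsingle : p * Pi.single k 1 * p = Pi.single k 1 := by
    ext i
    by_cases h : i = k
    · subst h; simp [hk1]
    · simp [Pi.single_eq_of_ne h]
  have hc1 : c = 1 := by simpa [hk1, hsingle] using (congrFun hc k).symm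
  exact ⟨k, by rw [← hsingle, hc, hc1, one_smul]⟩

theorem Pi.single_mul_single_of_ne {ι : Type*} [DecidableEq ι] {α : ι → Type*}
    [∀ i, MulZeroClass (α i)] {i i' : ι} (h : i ≠ i') (x : α i) (y : α i') :
    Pi.single i x * Pi.single i' y = 0 := by
  rw [← Pi.single_mul_left, Pi.single_eq_of_ne h, mul_zero, Pi.single_zero]

theorem IsMinProj.pi_single {ι : Type*} [DecidableEq ι] {B : ι → Type*} [∀ i, Ring (B i)]
    [∀ i, StarRing (B i)] [∀ i, Module ℂ (B i)] {k : ι} {p : B k} (hp : IsMinProj p) :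
    IsMinProj (Pi.single k p : ∀ i, B i) := by
  obtain ⟨hne, hidem, hstar, hcomp⟩ := hp
  refine ⟨Pi.single_eq_zero_iff.not.2 hne, by rw [← Pi.single_mul, hidem],
    by rw [← Pi.single_star, hstar], fun x => ?_⟩
  obtain ⟨c, hc⟩ := hcomp (x k)
  exact ⟨c, by rw [← Pi.single_mul_left, ← Pi.single_mul, hc, Pi.single_smul]⟩

theorem isMinProj_smul_vecMulVec_star {d : Type*} [Fintype d] [DecidableEq d] {w : d → ℂ}
    (hw : w ≠ 0) : IsMinProj ((star w ⬝ᵥ w)⁻¹ • vecMulVec w (star w)) := by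
  have hn : star w ⬝ᵥ w ≠ 0 := dotProduct_star_self_eq_zero.not.2 hw
  have hreal : star (star w ⬝ᵥ w) = star w ⬝ᵥ w := (star_dotProduct w w).symm
  refine ⟨?_, ?_, ?_, fun X => ⟨(star w ⬝ᵥ w)⁻¹ * (star w ᵥ* X ⬝ᵥ w), ?_⟩⟩
  · obtain ⟨a, ha⟩ := Function.ne_iff.1 hw
    refine smul_ne_zero (inv_ne_zero hn) fun h => ?_
    have := congrFun (congrFun h a) a
    simp only [vecMulVec_apply, Pi.star_apply, Matrix.zero_apply, mul_eq_zero, star_eq_zero,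
      or_self] at this
    exact ha this
  · rw [smul_mul_smul_comm, vecMulVec_mul_vecMulVec, vecMulVec_smul, smul_smul]
    congr 1
    field_simp
  · rw [star_smul, star_inv₀, hreal, star_eq_conjTranspose, conjTranspose_vecMulVec, star_star]
  · rw [smul_mul_assoc, smul_mul_assoc, mul_smul_comm, vecMulVec_mul, vecMulVec_mul_vecMulVec,
      vecMulVec_smul, smul_smul, smul_smul, smul_smul]
    congr 1
    ring

theorem MvPolynomial.exists_forall_eval_ne_zero {R σ ι : Type*} [CommRing R] [IsDomain R]
    [Infinite R] [Fintype ι] {P : ι → MvPolynomial σ R} (hP : ∀ i, P i ≠ 0) :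
    ∃ x : σ → R, ∀ i, eval x (P i) ≠ 0 := by
  have hprod : ∏ i, P i ≠ 0 := Finset.prod_ne_zero_iff.2 fun i _ => hP i
  obtain ⟨x, hx⟩ : ∃ x, eval x (∏ i, P i) ≠ 0 := by
    by_contra! h
    exact hprod (MvPolynomial.funext fun x => by simpa using h x)
  rw [map_prod] at hx
  exact ⟨x, fun i => Finset.prod_ne_zero_iff.1 hx i (Finset.mem_univ i)⟩

theorem exists_single_mul_single_ne_zero {A d d' : Type*} [NonUnitalNonAssocSemiring A]
    [Module ℂ A] [Fintype d] [DecidableEq d] [Fintype d'] [DecidableEq d']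
    (ψ : Matrix d d ℂ →ₗ[ℂ] A) (ψ' : Matrix d' d' ℂ →ₗ[ℂ] A) (h : ψ 1 * ψ' 1 ≠ 0) :
    ∃ a b, ψ (single a a 1) * ψ' (single b b 1) ≠ 0 := by
  by_contra! h0
  apply h
  rw [← sum_single_one, ← sum_single_one, map_sum, map_sum, Finset.sum_mul_sum]
  exact Finset.sum_eq_zero fun a _ => Finset.sum_eq_zero fun b _ => h0 a b

def blockVec {J : Type*} {d : J → Type*} (x : (Σ j, d j) → ℝ) (j : J) : d j → ℂ :=
  fun a => x ⟨j, a⟩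

theorem blockVec_single_add_single {J : Type*} [DecidableEq J] {d : J → Type*}
    [∀ j, DecidableEq (d j)] {j j' : J} (h : j ≠ j') (a : d j) (b : d j') :
    blockVec (Pi.single ⟨j, a⟩ 1 + Pi.single ⟨j', b⟩ 1) j = Pi.single a 1 := by
  funext c
  simp [blockVec, Pi.single_apply, h, apply_ite ((↑) : ℝ → ℂ)]

section GenericRankOne

variable {A : Type*} [NonUnitalRing A] [Module ℂ A] [IsScalarTower ℂ A A] [SMulCommClass ℂ A A]
  {J : Type*} {d : J → Type*} [∀ j, Fintype (d j)] [∀ j, DecidableEq (d j)]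

theorem vecMulVec_blockVec_eq_sum (x : (Σ j, d j) → ℝ) (j : J) :
    vecMulVec (blockVec x j) (star (blockVec x j)) =
      ∑ a, ∑ b, ((x ⟨j, a⟩ * x ⟨j, b⟩ : ℝ) : ℂ) • single a b 1 := by
  conv_lhs => rw [matrix_eq_sum_single (vecMulVec _ _)]
  simp [blockVec, vecMulVec_apply]

theorem exists_mvPolynomial_eval_eq (ψ : ∀ j, Matrix (d j) (d j) ℂ →ₗ[ℂ] A) (g : A →ₗ[ℝ] ℝ)
    (j j' : J) : ∃ P : MvPolynomial (Σ j, d j) ℝ, ∀ x, MvPolynomial.eval x P =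
      g (ψ j (vecMulVec (blockVec x j) (star (blockVec x j))) *
        ψ j' (vecMulVec (blockVec x j') (star (blockVec x j')))) := by
  open MvPolynomial in
  refine ⟨∑ a, ∑ b, ∑ a', ∑ b', C (g (ψ j (single a a' 1) * ψ j' (single b b' 1))) *
    (X ⟨j, a⟩ * X ⟨j, a'⟩ * (X ⟨j', b⟩ * X ⟨j', b'⟩)), fun x => ?_⟩
  simp only [vecMulVec_blockVec_eq_sum, map_sum, map_smul, Finset.sum_mul_sum, smul_mul_smul_comm,
    ← Complex.ofReal_mul]
  simp only [Complex.coe_smul, map_smul, map_mul, MvPolynomial.eval_C, MvPolynomial.eval_X,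
    smul_eq_mul, mul_comm]

theorem exists_vecMulVec_star_mul_ne_zero [Fintype J] [DecidableEq J]
    (ψ : ∀ j, Matrix (d j) (d j) ℂ →ₗ[ℂ] A) (h : ∀ j j', j ≠ j' → ψ j 1 * ψ j' 1 ≠ 0) :
    ∃ w : ∀ j, d j → ℂ, ∀ j j', j ≠ j' →
      ψ j (vecMulVec (w j) (star (w j))) * ψ j' (vecMulVec (w j') (star (w j'))) ≠ 0 := by
  choose a b hab using fun p : {p : J × J // p.1 ≠ p.2} =>
    exists_single_mul_single_ne_zero (ψ p.1.1) (ψ p.1.2) (h p.1.1 p.1.2 p.2)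
  choose g hg using fun p => Module.Projective.exists_dual_ne_zero ℝ (hab p)
  choose P hP using fun p : {p : J × J // p.1 ≠ p.2} =>
    exists_mvPolynomial_eval_eq ψ (g p) p.1.1 p.1.2
  have hP0 : ∀ p, P p ≠ 0 := by
    rintro ⟨⟨j, j'⟩, hjj'⟩ h0
    have hpoint := hP ⟨_, hjj'⟩ (Pi.single ⟨j, a ⟨_, hjj'⟩⟩ 1 + Pi.single ⟨j', b ⟨_, hjj'⟩⟩ 1)
    rw [blockVec_single_add_single hjj', add_comm, blockVec_single_add_single hjj'.symm,
      ← Pi.single_star, ← Pi.single_star, star_one, ← single_eq_single_vecMulVec_single,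
      ← single_eq_single_vecMulVec_single, h0, map_zero] at hpoint
    exact hg _ hpoint.symm
  obtain ⟨x, hx⟩ := MvPolynomial.exists_forall_eval_ne_zero hP0
  refine ⟨blockVec x, fun j j' hjj' h0 => hx ⟨(j, j'), hjj'⟩ ?_⟩
  rw [hP, h0, map_zero]

end GenericRankOne

theorem stmt9_general {A : Type*} [NonUnitalNormedRing A]
    [NormedSpace ℂ A] [IsScalarTower ℂ A A] [SMulCommClass ℂ A A]
    (s : ℕ) (r : Fin s → ℕ)
    (φ : ((i : Fin s) → Matrix (Fin (r i)) (Fin (r i)) ℂ) →ₗ[ℂ] A)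
    (ι : (Fin s → ℂ) →ₗ[ℂ] ((i : Fin s) → Matrix (Fin (r i)) (Fin (r i)) ℂ))
    (hι : ∀ (v : Fin s → ℂ) (i : Fin s), ι v i = v i • 1) :
    ∀ n : ℕ, OrdLe φ n → OrdLe (fun v => φ (ι v)) n := by
  intro n hφ e he horth
  choose k hk using fun j => (he j).exists_eq_pi_single
  have hk_ne : ∀ j j', j ≠ j' → k j ≠ k j' := fun j j' hjj' hkk => by
    simpa [hk, hkk, ← Pi.single_mul] using horth j j' hjj'
  have hιe : ∀ j, ι (e j) = Pi.single (k j) 1 := fun j => by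
    funext i
    rw [hι, hk]
    by_cases h : i = k j
    · subst h; simp
    · simp [h]
  by_contra! hne
  let ψ j : Matrix (Fin (r (k j))) (Fin (r (k j))) ℂ →ₗ[ℂ] A :=
    φ ∘ₗ LinearMap.single ℂ (fun i => Matrix (Fin (r i)) (Fin (r i)) ℂ) (k j)
  obtain ⟨w, hw⟩ := exists_vecMulVec_star_mul_ne_zero ψ fun j j' hjj' => by
    simpa [ψ, hιe] using hne j j' hjj'
  have hw0 : ∀ j, w j ≠ 0 := fun j hj => by
    obtain ⟨j', hj'⟩ := exists_ne j
    exact hw j j' hj'.symm (by simp [hj])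
  obtain ⟨j, j', hjj', h0⟩ := hφ
    (fun j => Pi.single (k j) ((star (w j) ⬝ᵥ w j)⁻¹ • vecMulVec (w j) (star (w j))))
    (fun j => (isMinProj_smul_vecMulVec_star (hw0 j)).pi_single)
    (fun j j' hjj' => Pi.single_mul_single_of_ne (hk_ne j j' hjj') _ _)
  apply hw j j' hjj'
  simpa [ψ, Pi.single_smul, smul_mul_smul_comm, hw0] using h0

/-- Let `φ : F → A` be a positive contraction from `F = M_{r_1} ⊕ ⋯ ⊕ M_{r_s}` to a
C*-algebra `A`, and `ι : ℂ^s → F` the canonical unital embedding onto the center.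
Then `ord (φ ∘ ι) ≤ ord φ`. -/
theorem stmt9 {A : Type*} [NonUnitalNormedRing A] [StarRing A] [CStarRing A]
    [CompleteSpace A] [NormedSpace ℂ A] [IsScalarTower ℂ A A] [SMulCommClass ℂ A A]
    [StarModule ℂ A] [PartialOrder A] [StarOrderedRing A]
    (s : ℕ) (r : Fin s → ℕ)
    (φ : ((i : Fin s) → Matrix (Fin (r i)) (Fin (r i)) ℂ) →ₗ[ℂ] A)
    (hpos : ∀ x, (∀ i, (x i).PosSemidef) → 0 ≤ φ x)
    (hcontr : ‖φ 1‖ ≤ 1)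
    (ι : (Fin s → ℂ) →ₗ[ℂ] ((i : Fin s) → Matrix (Fin (r i)) (Fin (r i)) ℂ))
    (hι : ∀ (v : Fin s → ℂ) (i : Fin s), ι v i = v i • 1) :
    ∀ n : ℕ, OrdLe φ n → OrdLe (fun v => φ (ι v)) n :=
  stmt9_general s r φ ι hι
end

section
/- Let φ₁ : M_{r_1} → A₁ and φ₂ : M_{r_2} → A₂ be completely positive contractions of strict order zero between C*-algebras. Then the induced completely positive map φ₁ ⊗ φ₂ : M_{r_1} ⊗ M_{r_2} → A₁ ⊗ A₂ has strict order zero. -/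
open scoped ComplexOrder TensorProduct

/-- `φ` is completely positive, expressed via sums `Σ_{i,j} c_i* φ(a_i* a_j) c_j ≥ 0`. -/
def IsCPMap {B A : Type*} [Ring B] [StarRing B] [NonUnitalRing A] [StarRing A]
    [PartialOrder A] (φ : B → A) : Prop :=
  ∀ (k : ℕ) (a : Fin k → B) (c : Fin k → A),
    0 ≤ ∑ i, ∑ j, star (c i) * φ (star (a i) * a j) * c j

/-!
A completely positive map `φ : M_n → A` of strict order zero satisfies
`φ x * φ y = φ (x * y) * φ 1`, and this identity passes to `ψ`: it is bilinear and holds on the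
elementary tensors `e_ij ⊗ e_kl`. Then `e * f = 0` gives `ψ e * ψ f = ψ (e * f) * ψ 1 = 0`.

For `φ` one works with the images of rank-one matrices `v w*`. A Cauchy–Schwarz argument for
`2`-positive maps upgrades `φ (v v*) * φ (w w*) = 0` (for `v ⊥ w`) to `φ (x v*) * φ (w y*) = 0`.
Applying strict order zero to the orthogonal pairs `v + c w, v - c w` (`|c| = 1`,
`‖v‖ = ‖w‖`) then gives the remaining relations between matrix units; the last one,
`φ (e_ij) * φ (e_ji) = φ (e_ii)²`, holds because the difference of the two sides is a
self-adjoint element of square zero.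
-/

def IsStrictOrderZero {B A : Type*} [Ring B] [StarRing B] [Module ℂ B] [MulZeroClass A]
    (φ : B → A) : Prop :=
  ∀ e f, IsMinProj e → IsMinProj f → e * f = 0 → φ e * φ f = 0

theorem IsMinProj.isStarProjection {B : Type*} [Ring B] [StarRing B] [Module ℂ B] {p : B}
    (hp : IsMinProj p) : IsStarProjection p :=
  ⟨hp.2.1, hp.2.2.1⟩

open Matrix
open scoped Kronecker

namespace IsCPMap

theorem map_star_mul_self_nonneg {B A : Type*} [Ring B] [StarRing B] [Ring A] [StarRing A]
    [PartialOrder A] {φ : B → A} (hφ : IsCPMap φ) (x : B) : 0 ≤ φ (star x * x) := by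
  simpa using hφ 1 (fun _ => x) (fun _ => 1)

variable {B : Type*} [Ring B] [StarRing B] [Module ℂ B] [StarModule ℂ B]

theorem map_star {A : Type*} [Ring A] [StarRing A] [PartialOrder A] [StarOrderedRing A]
    [Module ℂ A] [StarModule ℂ A] {φ : B →ₗ[ℂ] A} (hφ : IsCPMap φ) (x : B) :
    φ (star x) = star (φ x) := by
  have hsa : ∀ y, IsSelfAdjoint (φ (star y * y)) :=
    fun y => IsSelfAdjoint.of_nonneg (hφ.map_star_mul_self_nonneg y)
  have hre : ∀ y, IsSelfAdjoint (φ y + φ (star y)) := fun y => by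
    have e : φ y + φ (star y)
        = φ (star (1 + y) * (1 + y)) - φ (star 1 * 1) - φ (star y * y) := by
      rw [← map_add, ← map_sub, ← map_sub]
      congr 1
      simp only [star_add, star_one]
      noncomm_ring
    rw [e]
    exact ((hsa _).sub (hsa _)).sub (hsa _)
  have h₁ := (hre x).star_eq
  have h₂ := (hre (Complex.I • x)).star_eq
  simp only [star_add, star_smul, map_smul, Complex.star_def, Complex.conj_I, map_neg,
    neg_neg] at h₁ h₂
  linear_combination (norm := skip) (-1 / 2 : ℂ) • h₁ + (-Complex.I / 2) • h₂
  match_scalars <;> ring_nf <;> simp only [Complex.I_sq] <;> ring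

variable {A : Type*} [CStarAlgebra A] [PartialOrder A] [StarOrderedRing A] {φ : B →ₗ[ℂ] A}

theorem star_mul_map_star_mul_eq_zero (hφ : IsCPMap φ) {a : B} {c : A}
    (h : star c * φ (star a * a) * c = 0) (b : B) : star c * φ (star a * b) = 0 := by
  set X := star c * φ (star a * b)
  set r := ‖φ (star b * b)‖
  have hX : star X = φ (star b * a) * c := by
    rw [star_mul, star_star, ← hφ.map_star, star_mul, star_star]
  -- `2`-positivity against `((r + 1) c, -X*)` gives `0 ≤ -(r + 2) X X*`
  have h2 := hφ 2 ![a, b] ![(r + 1) • c, -star X]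
  simp only [Fin.sum_univ_two, Matrix.cons_val_zero, Matrix.cons_val_one, star_smul, star_trivial,
    star_neg, star_star] at h2
  have hle := CStarAlgebra.star_right_conjugate_le_norm_smul (a := X)
    (IsSelfAdjoint.of_nonneg (hφ.map_star_mul_self_nonneg b))
  have hXX : 0 ≤ -((r + 2) • (X * star X)) := calc
    0 ≤ -(2 * (r + 1)) • (X * star X) + X * φ (star b * b) * star X := by
      convert h2 using 1
      simp only [smul_mul_assoc, mul_smul_comm, mul_neg, neg_mul, mul_assoc, ← hX]
      rw [← mul_assoc (star c), h, ← mul_assoc (star c)]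
      module
    _ ≤ -(2 * (r + 1)) • (X * star X) + r • (X * star X) := by gcongr
    _ = -((r + 2) • (X * star X)) := by module
  have h0 : (r + 2) • (X * star X) = 0 :=
    le_antisymm (neg_nonneg.mp hXX) (smul_nonneg (by positivity) (mul_star_self_nonneg X))
  rw [smul_eq_zero, CStarRing.mul_star_self_eq_zero_iff] at h0
  exact h0.resolve_left (by positivity)

theorem map_mul_mul_map_mul_eq_zero (hφ : IsCPMap φ) {p q : B} (hp : IsStarProjection p)
    (hq : IsStarProjection q) (hpq : φ p * φ q = 0) (x y : B) : φ (x * p) * φ (q * y) = 0 := by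
  have hsa : ∀ {e : B}, IsStarProjection e → star (φ e) = φ e := fun he => by
    rw [← hφ.map_star, he.isSelfAdjoint.star_eq]
  have hsp : ∀ {e : B}, IsStarProjection e → star e * e = e := fun he => by
    rw [he.isSelfAdjoint.star_eq, he.isIdempotentElem.eq]
  have hqp : φ q * φ p = 0 := by
    rw [← hsa hp, ← hsa hq, ← star_mul, hpq, star_zero]
  have hqpx : φ q * φ (p * star x) = 0 := by
    have := hφ.star_mul_map_star_mul_eq_zero (a := p) (c := φ q) (by
      rw [hsa hq, hsp hp, hqp, zero_mul]) (star x)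
    rwa [hsa hq, hp.isSelfAdjoint.star_eq] at this
  have := hφ.star_mul_map_star_mul_eq_zero (a := q) (c := φ (p * star x)) (by
    rw [hsp hq, mul_assoc, hqpx, mul_zero]) y
  rwa [← hφ.map_star, star_mul, star_star, hp.isSelfAdjoint.star_eq,
    hq.isSelfAdjoint.star_eq] at this

end IsCPMap

theorem star_vecMulVec_star {n : Type*} (v w : n → ℂ) :
    star (vecMulVec v (star w)) = vecMulVec w (star v) := by
  simp [star_eq_conjTranspose]

theorem single_eq_vecMulVec_star {n : Type*} [DecidableEq n] (i j : n) :
    single i j (1 : ℂ) = vecMulVec (Pi.single i 1) (star (Pi.single j 1)) := by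
  rw [single_eq_single_vecMulVec_single, ← Pi.single_star, star_one]

section LineProjection

variable {n : Type*} [Fintype n]

theorem vecMulVec_star_mul_vecMulVec_star (a b c d : n → ℂ) :
    vecMulVec a (star b) * vecMulVec c (star d) = (star b ⬝ᵥ c) • vecMulVec a (star d) := by
  rw [vecMulVec_mul_vecMulVec, vecMulVec_smul]

/-- Junk value `0` at `v = 0`. -/
noncomputable def lineProj (v : n → ℂ) : Matrix n n ℂ :=
  (star v ⬝ᵥ v)⁻¹ • vecMulVec v (star v)

theorem vecMulVec_star_mul_lineProj (x : n → ℂ) {v : n → ℂ} (hv : v ≠ 0) :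
    vecMulVec x (star v) * lineProj v = vecMulVec x (star v) := by
  rw [lineProj, mul_smul_comm, vecMulVec_star_mul_vecMulVec_star, smul_smul,
    inv_mul_cancel₀ (dotProduct_star_self_eq_zero.not.mpr hv), one_smul]

theorem lineProj_mul_vecMulVec_star {w : n → ℂ} (hw : w ≠ 0) (y : n → ℂ) :
    lineProj w * vecMulVec w (star y) = vecMulVec w (star y) := by
  rw [lineProj, smul_mul_assoc, vecMulVec_star_mul_vecMulVec_star, smul_smul,
    inv_mul_cancel₀ (dotProduct_star_self_eq_zero.not.mpr hw), one_smul]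

theorem lineProj_mul_lineProj_eq_zero {v w : n → ℂ} (hvw : star v ⬝ᵥ w = 0) :
    lineProj v * lineProj w = 0 := by
  rw [lineProj, lineProj, smul_mul_smul_comm, vecMulVec_star_mul_vecMulVec_star, hvw, zero_smul,
    smul_zero]

theorem isMinProj_lineProj [DecidableEq n] {v : n → ℂ} (hv : v ≠ 0) : IsMinProj (lineProj v) := by
  have ht : star v ⬝ᵥ v ≠ 0 := dotProduct_star_self_eq_zero.not.mpr hv
  refine ⟨?_, ?_, ?_, fun x => ⟨(star v ⬝ᵥ v)⁻¹ * ((star v ᵥ* x) ⬝ᵥ v), ?_⟩⟩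
  · obtain ⟨i, hi⟩ := Function.ne_iff.mp hv
    intro h
    exact hi (by simpa [lineProj, vecMulVec_apply, ht] using congrFun (congrFun h i) i)
  · rw [lineProj, smul_mul_smul_comm, vecMulVec_star_mul_vecMulVec_star, smul_smul]
    congr 1
    field_simp
  · rw [lineProj, star_smul, star_vecMulVec_star, star_inv₀, ← star_dotProduct]
  · rw [lineProj, smul_mul_assoc, mul_smul_comm, smul_mul_assoc, vecMulVec_mul,
      vecMulVec_mul_vecMulVec, vecMulVec_smul, smul_smul, smul_smul, smul_smul]
    ring_nf

end LineProjection

theorem map_mul_map_eq_of_forall_single {R A : Type*} [CommSemiring R] [Semiring A] [Algebra R A]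
    {n : Type*} [Fintype n] [DecidableEq n] (φ : Matrix n n R →ₗ[R] A) (h : A)
    (hφ : ∀ i j k l, φ (single i j 1) * φ (single k l 1) = φ (single i j 1 * single k l 1) * h)
    (x y : Matrix n n R) : φ x * φ y = φ (x * y) * h := by
  have hB : (LinearMap.mul R A).compl₁₂ φ φ
      = (LinearMap.mul R (Matrix n n R)).compr₂ ((LinearMap.mulRight R h).comp φ) :=
    LinearMap.ext_basis (stdBasis R n n) (stdBasis R n n) fun ⟨i, j⟩ ⟨k, l⟩ => by
      simpa [stdBasis_eq_single] using hφ i j k l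
  simpa using LinearMap.congr_fun₂ hB x y

namespace IsCPMap

variable {A : Type*} [CStarAlgebra A] [PartialOrder A] [StarOrderedRing A]
  {n : Type*} [Fintype n] [DecidableEq n] {φ : Matrix n n ℂ →ₗ[ℂ] A}

theorem map_vecMulVec_mul_map_vecMulVec_eq_zero (hφ : IsCPMap φ) (hoz : IsStrictOrderZero φ)
    {v w : n → ℂ} (hvw : star v ⬝ᵥ w = 0) (x y : n → ℂ) :
    φ (vecMulVec x (star v)) * φ (vecMulVec w (star y)) = 0 := by
  rcases eq_or_ne v 0 with rfl | hv
  · simp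
  rcases eq_or_ne w 0 with rfl | hw
  · simp
  have hpv := isMinProj_lineProj hv
  have hpw := isMinProj_lineProj hw
  rw [← vecMulVec_star_mul_lineProj x hv, ← lineProj_mul_vecMulVec_star hw y]
  exact hφ.map_mul_mul_map_mul_eq_zero hpv.isStarProjection hpw.isStarProjection
    (hoz _ _ hpv hpw (lineProj_mul_lineProj_eq_zero hvw)) _ _

/-- Expansion of `φ ((v + c w)(v + c w)*) * φ ((v - c w)(v - c w)*) = 0`. -/
theorem map_vecMulVec_rotation (hφ : IsCPMap φ) (hoz : IsStrictOrderZero φ) {v w : n → ℂ}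
    (hvw : star v ⬝ᵥ w = 0) (hvv : star v ⬝ᵥ v = star w ⬝ᵥ w) {c : ℂ} (hc : star c * c = 1) :
    φ (vecMulVec v (star v)) * φ (vecMulVec v (star v))
      + φ (vecMulVec w (star w)) * φ (vecMulVec w (star w))
      - φ (vecMulVec v (star w)) * φ (vecMulVec w (star v))
      - φ (vecMulVec w (star v)) * φ (vecMulVec v (star w))
      + star c • (φ (vecMulVec v (star w)) * φ (vecMulVec w (star w))
        - φ (vecMulVec v (star v)) * φ (vecMulVec v (star w)))
      + c • (φ (vecMulVec w (star v)) * φ (vecMulVec v (star v))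
        - φ (vecMulVec w (star w)) * φ (vecMulVec w (star v))) = 0 := by
  have hwv : star w ⬝ᵥ v = 0 := by rw [star_dotProduct, hvw, star_zero]
  have h0 : ∀ {a b : n → ℂ}, star a ⬝ᵥ b = 0 → ∀ x y,
      φ (vecMulVec x (star a)) * φ (vecMulVec b (star y)) = 0 :=
    hφ.map_vecMulVec_mul_map_vecMulVec_eq_zero hoz
  have hexp : ∀ d : ℂ, star d * d = 1 →
      φ (vecMulVec (v + d • w) (star (v + d • w))) = φ (vecMulVec v (star v))
        + star d • φ (vecMulVec v (star w)) + d • φ (vecMulVec w (star v))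
        + φ (vecMulVec w (star w)) := by
    intro d hd
    simp only [star_add, star_smul, vecMulVec_add, add_vecMulVec, vecMulVec_smul,
      smul_vecMulVec, map_add, map_smul, smul_add, smul_smul, hd, one_smul]
    abel
  have horth : star (v + c • w) ⬝ᵥ (v + (-c) • w) = 0 := by
    simp only [star_add, star_smul, add_dotProduct, dotProduct_add, smul_dotProduct,
      dotProduct_smul, hvw, hwv, hvv, smul_eq_mul]
    linear_combination (star w ⬝ᵥ w) * (-hc)
  have h := h0 horth (v + c • w) (v + (-c) • w)
  rw [hexp c hc, hexp (-c) (by rw [star_neg, neg_mul_neg, hc]), star_neg, neg_smul,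
    neg_smul, ← sub_eq_add_neg, ← sub_eq_add_neg] at h
  have hc' : c * star c = 1 := by rw [mul_comm, hc]
  simp only [add_mul, mul_add, mul_sub, smul_mul_assoc, mul_smul_comm, smul_add, smul_smul, hc,
    hc', h0 hvw v w, h0 hwv w v, h0 hwv v w, h0 hvw w v, h0 hvw v v, h0 hwv v v, h0 hwv w w,
    h0 hvw w w, smul_zero, one_smul] at h
  linear_combination (norm := module) h

theorem map_vecMulVec_self_mul_map_vecMulVec (hφ : IsCPMap φ) (hoz : IsStrictOrderZero φ)
    {v w : n → ℂ} (hvw : star v ⬝ᵥ w = 0) (hvv : star v ⬝ᵥ v = star w ⬝ᵥ w) :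
    φ (vecMulVec v (star v)) * φ (vecMulVec v (star w))
      = φ (vecMulVec v (star w)) * φ (vecMulVec w (star w)) := by
  have h₁ := map_vecMulVec_rotation hφ hoz hvw hvv (c := 1) (by simp)
  have h₂ := map_vecMulVec_rotation hφ hoz hvw hvv (c := -1) (by simp)
  have h₃ := map_vecMulVec_rotation hφ hoz hvw hvv (c := Complex.I) (by simp)
  simp only [star_one, star_neg, one_smul, neg_smul, Complex.star_def, Complex.conj_I] at h₁ h₂ h₃
  rw [← sub_eq_zero]
  linear_combination (norm := skip) ((Complex.I - 1) / 4) • h₁ + ((1 + Complex.I) / 4) • h₂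
    - (Complex.I / 2) • h₃
  match_scalars <;> ring_nf <;> simp only [Complex.I_sq] <;> ring

theorem map_vecMulVec_mul_map_vecMulVec_swap (hφ : IsCPMap φ) (hoz : IsStrictOrderZero φ)
    {v w : n → ℂ} (hvw : star v ⬝ᵥ w = 0) (hvv : star v ⬝ᵥ v = star w ⬝ᵥ w) :
    φ (vecMulVec v (star w)) * φ (vecMulVec w (star v))
      = φ (vecMulVec v (star v)) * φ (vecMulVec v (star v)) := by
  have hQ : φ (vecMulVec v (star w)) * φ (vecMulVec w (star v))
        + φ (vecMulVec w (star v)) * φ (vecMulVec v (star w))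
      = φ (vecMulVec v (star v)) * φ (vecMulVec v (star v))
        + φ (vecMulVec w (star w)) * φ (vecMulVec w (star w)) := by
    have h₁ := map_vecMulVec_rotation hφ hoz hvw hvv (c := 1) (by simp)
    have h₂ := map_vecMulVec_rotation hφ hoz hvw hvv (c := -1) (by simp)
    simp only [star_one, star_neg] at h₁ h₂
    rw [← sub_eq_zero]
    linear_combination (norm := module) (-1 / 2 : ℂ) • (h₁ + h₂)
  have hEG := hφ.map_vecMulVec_mul_map_vecMulVec_eq_zero hoz hvw v w
  have hZ'Z' := hφ.map_vecMulVec_mul_map_vecMulVec_eq_zero hoz hvw w v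
  have hEZ' := hφ.map_vecMulVec_mul_map_vecMulVec_eq_zero hoz hvw v v
  have hZ'G := hφ.map_vecMulVec_mul_map_vecMulVec_eq_zero hoz hvw w w
  set E := φ (vecMulVec v (star v))
  set Z := φ (vecMulVec v (star w))
  set Z' := φ (vecMulVec w (star v))
  set G := φ (vecMulVec w (star w))
  -- `D := Z Z' - E²` is self-adjoint and, by `hQ`, also equals `G² - Z' Z`; hence `D² = 0`
  have hD : Z * Z' - E * E = G * G - Z' * Z := by
    rw [sub_eq_sub_iff_add_eq_add, hQ, add_comm]
  have hsZ : star Z = Z' := by rw [← hφ.map_star, star_vecMulVec_star]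
  have hsE : star E = E := by rw [← hφ.map_star, star_vecMulVec_star]
  have hDsa : star (Z * Z' - E * E) = Z * Z' - E * E := by
    rw [star_sub, star_mul, star_mul, hsE, ← hsZ, star_star]
  have hDD : star (Z * Z' - E * E) * (Z * Z' - E * E) = 0 := by
    rw [hDsa]
    nth_rewrite 2 [hD]
    simp only [mul_sub, sub_mul, mul_assoc]
    rw [← mul_assoc Z' G, hZ'G, ← mul_assoc E G, hEG, ← mul_assoc Z' Z', hZ'Z', ← mul_assoc E Z',
      hEZ']
    simp
  exact sub_eq_zero.mp ((CStarRing.star_mul_self_eq_zero_iff _).mp hDD)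

theorem map_single_mul_map_single_of_ne (hφ : IsCPMap φ) (hoz : IsStrictOrderZero φ) {j k : n}
    (hjk : j ≠ k) (i l : n) :
    φ (single i j 1) * φ (single k l 1) = 0 := by
  rw [single_eq_vecMulVec_star, single_eq_vecMulVec_star]
  exact hφ.map_vecMulVec_mul_map_vecMulVec_eq_zero hoz (by simp [hjk]) _ _

theorem map_single_mul_map_one (hφ : IsCPMap φ) (hoz : IsStrictOrderZero φ) (i j : n) :
    φ (single i j 1) * φ 1 = φ (single i j 1) * φ (single j j 1) := by
  rw [← sum_single_one, map_sum, Finset.mul_sum, Finset.sum_eq_single j]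
  · exact fun k _ hkj => map_single_mul_map_single_of_ne hφ hoz hkj.symm i k
  · simp

theorem map_single_self_mul_map_single (hφ : IsCPMap φ) (hoz : IsStrictOrderZero φ)
    {i j : n} (hij : i ≠ j) :
    φ (single i i 1) * φ (single i j 1) = φ (single i j 1) * φ (single j j 1) := by
  simpa only [← single_eq_vecMulVec_star] using
    map_vecMulVec_self_mul_map_vecMulVec hφ hoz (v := Pi.single i 1) (w := Pi.single j 1)
      (by simp [hij]) (by simp)

theorem map_single_mul_map_single_swap (hφ : IsCPMap φ) (hoz : IsStrictOrderZero φ)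
    {i j : n} (hij : i ≠ j) :
    φ (single i j 1) * φ (single j i 1) = φ (single i i 1) * φ (single i i 1) := by
  simpa only [← single_eq_vecMulVec_star] using
    map_vecMulVec_mul_map_vecMulVec_swap hφ hoz (v := Pi.single i 1) (w := Pi.single j 1)
      (by simp [hij]) (by simp)

theorem map_single_rotation (hφ : IsCPMap φ) (hoz : IsStrictOrderZero φ) {i j l : n}
    (hij : i ≠ j) (hil : i ≠ l) (hjl : j ≠ l) {θ : ℂ} (hθ : star θ * θ = 1) :
    φ (single i j 1) * φ 1 + star θ • (φ (single i l 1) * φ 1)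
      = star θ • (φ (single i j 1) * φ (single j l 1)) + φ (single i l 1) * φ (single l j 1) := by
  -- any `c` with `|c|² = 2` makes `c e_i` as long as `e_j + θ e_l`
  obtain ⟨c, hc, hc0⟩ : ∃ c : ℂ, star c * c = 2 ∧ c ≠ 0 :=
    ⟨1 + Complex.I, by simp [Complex.ext_iff]; norm_num, by simp [Complex.ext_iff]⟩
  set v : n → ℂ := c • Pi.single i 1
  set w : n → ℂ := Pi.single j 1 + θ • Pi.single l 1
  have hvw : star v ⬝ᵥ w = 0 := by simp [v, w, hij, hil]
  have hvv : star v ⬝ᵥ v = star w ⬝ᵥ w := by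
    simp only [v, w, star_add, star_smul, dotProduct_add, add_dotProduct, dotProduct_smul,
      smul_dotProduct]
    have hc' : c * starRingEnd ℂ c = 2 := by rw [mul_comm]; exact hc
    have hθ' : θ * starRingEnd ℂ θ = 1 := by rw [mul_comm]; exact hθ
    simp [hjl, hjl.symm, hc', hθ']
    norm_num
  have hE : φ (vecMulVec v (star v)) = (2 : ℂ) • φ (single i i 1) := by
    rw [← hc]
    simp only [v, star_smul, vecMulVec_smul, smul_vecMulVec, ← single_eq_vecMulVec_star,
      map_smul, smul_smul]
  have hZ : φ (vecMulVec v (star w)) = c • (φ (single i j 1) + star θ • φ (single i l 1)) := by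
    simp only [v, w, star_add, star_smul, vecMulVec_add, vecMulVec_smul, smul_vecMulVec,
      ← single_eq_vecMulVec_star, map_add, map_smul, smul_add]
    module
  have hG : φ (vecMulVec w (star w)) = φ (single j j 1) + star θ • φ (single j l 1)
      + θ • φ (single l j 1) + φ (single l l 1) := by
    simp only [w, star_add, star_smul, vecMulVec_add, add_vecMulVec, vecMulVec_smul,
      smul_vecMulVec, ← single_eq_vecMulVec_star, map_add, map_smul, smul_add, smul_smul, hθ,
      one_smul]
    abel
  have h := map_vecMulVec_self_mul_map_vecMulVec hφ hoz hvw hvv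
  rw [hE, hZ, hG, smul_mul_smul_comm, smul_mul_assoc, mul_comm (2 : ℂ) c, ← smul_smul] at h
  replace h := smul_right_injective A hc0 h
  have hiij : φ (single i i 1) * φ (single i j 1) = φ (single i j 1) * φ 1 := by
    rw [map_single_self_mul_map_single hφ hoz hij, map_single_mul_map_one hφ hoz]
  have hiil : φ (single i i 1) * φ (single i l 1) = φ (single i l 1) * φ 1 := by
    rw [map_single_self_mul_map_single hφ hoz hil, map_single_mul_map_one hφ hoz]
  simp only [mul_add, add_mul, mul_smul_comm, smul_mul_assoc, smul_add, smul_smul, hiij, hiil,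
    ← map_single_mul_map_one hφ hoz, map_single_mul_map_single_of_ne hφ hoz hjl,
    map_single_mul_map_single_of_ne hφ hoz hjl.symm, smul_zero, add_zero, zero_add,
    mul_comm θ, hθ, one_smul] at h
  linear_combination (norm := module) h

theorem map_single_mul_map_single_of_pairwise_ne (hφ : IsCPMap φ) (hoz : IsStrictOrderZero φ)
    {i j l : n} (hij : i ≠ j) (hil : i ≠ l) (hjl : j ≠ l) :
    φ (single i j 1) * φ (single j l 1) = φ (single i l 1) * φ 1 := by
  have h₁ := map_single_rotation hφ hoz hij hil hjl (θ := 1) (by simp)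
  have h₂ := map_single_rotation hφ hoz hij hil hjl (θ := Complex.I) (by simp)
  simp only [star_one, one_smul, Complex.star_def, Complex.conj_I, neg_smul] at h₁ h₂
  have h : (1 + Complex.I) • (φ (single i j 1) * φ (single j l 1) - φ (single i l 1) * φ 1)
      = 0 := by
    linear_combination (norm := module) h₂ - h₁
  rw [smul_eq_zero, sub_eq_zero] at h
  exact h.resolve_left (by simp [Complex.ext_iff])

theorem map_single_mul_map_single_same (hφ : IsCPMap φ) (hoz : IsStrictOrderZero φ) (i j l : n) :
    φ (single i j 1) * φ (single j l 1) = φ (single i l 1) * φ 1 := by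
  rcases eq_or_ne j l with rfl | hjl
  · exact (map_single_mul_map_one hφ hoz i j).symm
  rcases eq_or_ne i j with rfl | hij
  · rw [map_single_self_mul_map_single hφ hoz hjl, map_single_mul_map_one hφ hoz]
  rcases eq_or_ne i l with rfl | hil
  · rw [map_single_mul_map_single_swap hφ hoz hij, map_single_mul_map_one hφ hoz]
  exact map_single_mul_map_single_of_pairwise_ne hφ hoz hij hil hjl

theorem map_mul_map_eq_map_mul_mul_map_one (hφ : IsCPMap φ) (hoz : IsStrictOrderZero φ)
    (x y : Matrix n n ℂ) : φ x * φ y = φ (x * y) * φ 1 := by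
  refine map_mul_map_eq_of_forall_single φ _ (fun i j k l => ?_) x y
  rcases eq_or_ne j k with rfl | hjk
  · rw [single_mul_single_same, one_mul, hφ.map_single_mul_map_single_same hoz]
  · rw [single_mul_single_of_ne (h := hjk), map_zero, zero_mul,
      hφ.map_single_mul_map_single_of_ne hoz hjk]

end IsCPMap

theorem map_mul_map_of_kronecker {R A₁ A₂ : Type*} [CommSemiring R] [Semiring A₁] [Algebra R A₁]
    [Semiring A₂] [Algebra R A₂] {m n : Type*} [Fintype m] [DecidableEq m] [Fintype n]
    [DecidableEq n] {φ₁ : Matrix m m R →ₗ[R] A₁} {φ₂ : Matrix n n R →ₗ[R] A₂}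
    (h₁ : ∀ x y, φ₁ x * φ₁ y = φ₁ (x * y) * φ₁ 1) (h₂ : ∀ x y, φ₂ x * φ₂ y = φ₂ (x * y) * φ₂ 1)
    {ψ : Matrix (m × n) (m × n) R →ₗ[R] A₁ ⊗[R] A₂}
    (hψ : ∀ x₁ x₂, ψ (x₁ ⊗ₖ x₂) = φ₁ x₁ ⊗ₜ[R] φ₂ x₂) (x y : Matrix (m × n) (m × n) R) :
    ψ x * ψ y = ψ (x * y) * ψ 1 := by
  have hsingle : ∀ a b : m × n, single a b (1 : R) = single a.1 b.1 1 ⊗ₖ single a.2 b.2 1 :=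
    fun a b => by rw [single_kronecker_single, mul_one]
  refine map_mul_map_eq_of_forall_single ψ _ (fun i j k l => ?_) x y
  rw [hsingle i j, hsingle k l, ← mul_kronecker_mul, hψ, hψ, hψ,
    Algebra.TensorProduct.tmul_mul_tmul, h₁, h₂, ← one_kronecker_one, hψ,
    Algebra.TensorProduct.tmul_mul_tmul]

theorem stmt11_general {A₁ A₂ : Type*}
    [NormedRing A₁] [StarRing A₁] [CStarRing A₁] [CompleteSpace A₁]
    [NormedAlgebra ℂ A₁] [StarModule ℂ A₁] [PartialOrder A₁] [StarOrderedRing A₁]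
    [NormedRing A₂] [StarRing A₂] [CStarRing A₂] [CompleteSpace A₂]
    [NormedAlgebra ℂ A₂] [StarModule ℂ A₂] [PartialOrder A₂] [StarOrderedRing A₂]
    (r₁ r₂ : ℕ)
    (φ₁ : Matrix (Fin r₁) (Fin r₁) ℂ →ₗ[ℂ] A₁)
    (φ₂ : Matrix (Fin r₂) (Fin r₂) ℂ →ₗ[ℂ] A₂)
    (hcp₁ : IsCPMap φ₁)
    (hoz₁ : ∀ e f, IsMinProj e → IsMinProj f → e * f = 0 → φ₁ e * φ₁ f = 0)
    (hcp₂ : IsCPMap φ₂)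
    (hoz₂ : ∀ e f, IsMinProj e → IsMinProj f → e * f = 0 → φ₂ e * φ₂ f = 0)
    (ψ : Matrix (Fin r₁ × Fin r₂) (Fin r₁ × Fin r₂) ℂ →ₗ[ℂ] (A₁ ⊗[ℂ] A₂))
    (hψ : ∀ (x₁ : Matrix (Fin r₁) (Fin r₁) ℂ) (x₂ : Matrix (Fin r₂) (Fin r₂) ℂ),
      ψ (Matrix.kroneckerMap (· * ·) x₁ x₂) = φ₁ x₁ ⊗ₜ[ℂ] φ₂ x₂) :
    ∀ e f, IsMinProj e → IsMinProj f → e * f = 0 → ψ e * ψ f = 0 := by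
  let _ : CStarAlgebra A₁ := { complete := ‹CompleteSpace A₁›.complete }
  let _ : CStarAlgebra A₂ := { complete := ‹CompleteSpace A₂›.complete }
  have hψ_mul := map_mul_map_of_kronecker (hcp₁.map_mul_map_eq_map_mul_mul_map_one hoz₁)
    (hcp₂.map_mul_map_eq_map_mul_mul_map_one hoz₂) hψ
  intro e f _ _ hef
  rw [hψ_mul, hef, map_zero, zero_mul]

/-- If `φ₁ : M_{r₁} → A₁` and `φ₂ : M_{r₂} → A₂` are completely positive contractions of
strict order zero, then the induced map `φ₁ ⊗ φ₂ : M_{r₁} ⊗ M_{r₂} → A₁ ⊗ A₂` has strict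
order zero. -/
theorem stmt11 {A₁ A₂ : Type*}
    [NormedRing A₁] [StarRing A₁] [CStarRing A₁] [CompleteSpace A₁]
    [NormedAlgebra ℂ A₁] [StarModule ℂ A₁] [PartialOrder A₁] [StarOrderedRing A₁]
    [NormedRing A₂] [StarRing A₂] [CStarRing A₂] [CompleteSpace A₂]
    [NormedAlgebra ℂ A₂] [StarModule ℂ A₂] [PartialOrder A₂] [StarOrderedRing A₂]
    (r₁ r₂ : ℕ)
    (φ₁ : Matrix (Fin r₁) (Fin r₁) ℂ →ₗ[ℂ] A₁)
    (φ₂ : Matrix (Fin r₂) (Fin r₂) ℂ →ₗ[ℂ] A₂)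
    (hcp₁ : IsCPMap φ₁) (hc₁ : ‖φ₁ 1‖ ≤ 1)
    (hoz₁ : ∀ e f, IsMinProj e → IsMinProj f → e * f = 0 → φ₁ e * φ₁ f = 0)
    (hcp₂ : IsCPMap φ₂) (hc₂ : ‖φ₂ 1‖ ≤ 1)
    (hoz₂ : ∀ e f, IsMinProj e → IsMinProj f → e * f = 0 → φ₂ e * φ₂ f = 0)
    (ψ : Matrix (Fin r₁ × Fin r₂) (Fin r₁ × Fin r₂) ℂ →ₗ[ℂ] (A₁ ⊗[ℂ] A₂))
    (hψ : ∀ (x₁ : Matrix (Fin r₁) (Fin r₁) ℂ) (x₂ : Matrix (Fin r₂) (Fin r₂) ℂ),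
      ψ (Matrix.kroneckerMap (· * ·) x₁ x₂) = φ₁ x₁ ⊗ₜ[ℂ] φ₂ x₂) :
    ∀ e f, IsMinProj e → IsMinProj f → e * f = 0 → ψ e * ψ f = 0 :=
  stmt11_general r₁ r₂ φ₁ φ₂ hcp₁ hoz₁ hcp₂ hoz₂ ψ hψ
end

section
/- Let K be a compact Hausdorff space, r ∈ ℕ, and q : K → M_r a continuous projection-valued function such that ‖q(s₁) − q(s₂)‖ < 1 for all s₁, s₂ ∈ K, with a distinguished point t ∈ K. Then there exists a continuous function w : K → M_r such that w(s)*w(s) = q(s) and w(s)w(s)* = q(t) for all s ∈ K, and w(t) = q(t); moreover w can be chosen with ‖w(s) − q(s)‖ ≤ some bound depending on sup ‖q(s) − q(t)‖. -/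
/-!
For projections `p`, `q` in a C⋆-algebra put `v = p q + (1 - p)(1 - q)` and `d = (p - q)²`.
Then `v q = p v`, `v⋆ v = v v⋆ = 1 - d`, and `d` commutes with `p`, `q` and `v`. When
`‖p - q‖ < 1` the spectrum of `d` lies in `[0, ‖p - q‖²] ⊆ [0, 1)`, so `e = (1 - d)^(-1/2)` exists
by the functional calculus and `w = v e q` satisfies `w⋆ w = q`, `w w⋆ = p`, with `w = p` when
`q = p`. Continuity of the functional calculus in its argument makes `w` continuous in `q`, and
splitting `w - q = ((v - 1) e + (e - 1)) q` gives `‖w - q‖ ≤ δ / (1 - δ)` for `δ = ‖p - q‖`.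
-/

section Ring
variable {R : Type*} [Ring R] {p q : R}

def intertwiner (p q : R) : R := p * q + (1 - p) * (1 - q)

lemma intertwiner_mul_eq_mul_intertwiner (hp : IsIdempotentElem p) (hq : IsIdempotentElem q) :
    intertwiner p q * q = p * intertwiner p q := by
  have hq_right : intertwiner p q * q = p * q := by
    rw [intertwiner, add_mul, mul_assoc, mul_assoc, hq.eq, hq.one_sub_mul_self, mul_zero, add_zero]
  have hp_left : p * intertwiner p q = p * q := by
    rw [intertwiner, mul_add, ← mul_assoc, ← mul_assoc, hp.eq, hp.mul_one_sub_self, zero_mul,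
      add_zero]
  rw [hq_right, hp_left]

lemma intertwiner_mul_intertwiner (hp : IsIdempotentElem p) (hq : IsIdempotentElem q) :
    intertwiner p q * intertwiner q p = 1 - (p - q) ^ 2 := by
  have hq' : ∀ x : R, q * (q * x) = q * x := fun x => by rw [← mul_assoc, hq.eq]
  simp only [intertwiner, sq, mul_add, add_mul, mul_sub, sub_mul, mul_one, one_mul, mul_assoc,
    hp.eq, hq.eq, hq']
  abel

lemma commute_sub_sq_left (hp : IsIdempotentElem p) (hq : IsIdempotentElem q) :
    Commute p ((p - q) ^ 2) := by
  have hp' : ∀ x : R, p * (p * x) = p * x := fun x => by rw [← mul_assoc, hp.eq]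
  simp only [Commute, SemiconjBy, sq, mul_sub, sub_mul, mul_assoc, hp.eq, hp', hq.eq]
  abel

lemma commute_sub_sq_right (hp : IsIdempotentElem p) (hq : IsIdempotentElem q) :
    Commute q ((p - q) ^ 2) := by
  simpa only [← neg_sub p q, neg_sq] using commute_sub_sq_left hq hp

lemma commute_intertwiner_sub_sq (hp : IsIdempotentElem p) (hq : IsIdempotentElem q) :
    Commute (intertwiner p q) ((p - q) ^ 2) := by
  have hpD := commute_sub_sq_left hp hq
  have hqD := commute_sub_sq_right hp hq
  exact (hpD.mul_left hqD).add_left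
    (((Commute.one_left _).sub_left hpD).mul_left ((Commute.one_left _).sub_left hqD))

lemma intertwiner_sub_one (hp : IsIdempotentElem p) :
    intertwiner p q - 1 = (2 * p - 1) * (q - p) := by
  simp only [intertwiner, two_mul, mul_sub, sub_mul, add_mul, one_mul, mul_one, hp.eq]
  abel

lemma intertwiner_self (hp : IsIdempotentElem p) : intertwiner p p = 1 := by
  rw [intertwiner, hp.eq, hp.one_sub.eq, add_sub_cancel]

lemma star_intertwiner [StarRing R] (hp : IsSelfAdjoint p) (hq : IsSelfAdjoint q) :
    star (intertwiner p q) = intertwiner q p := by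
  simp only [intertwiner, star_add, star_mul, star_sub, star_one, hp.star_eq, hq.star_eq]

end Ring

lemma continuousOn_inv_sqrt_one_sub : ContinuousOn (fun x : ℝ => (√(1 - x))⁻¹) (Set.Iio 1) :=
  ContinuousOn.inv₀ (by fun_prop) fun _ hx => (Real.sqrt_pos.2 (sub_pos.2 hx)).ne'

lemma inv_sqrt_one_sub_mem_Icc {x c : ℝ} (hx : 0 ≤ x) (hxc : x ≤ c) (hc : c < 1) :
    (√(1 - x))⁻¹ ∈ Set.Icc 1 (1 - c)⁻¹ := by
  have hc' : 0 < 1 - c := sub_pos.2 hc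
  have hsqrt_le_one : √(1 - x) ≤ 1 := Real.sqrt_le_one.2 (by linarith)
  have hle_sqrt : 1 - x ≤ √(1 - x) := Real.le_sqrt_of_sq_le (by nlinarith)
  exact ⟨one_le_inv₀ (by linarith) |>.2 hsqrt_le_one, inv_anti₀ hc' (by linarith)⟩

section CStarAlgebra
variable {A : Type*} [CStarAlgebra A]

lemma IsSelfAdjoint.spectrum_sq_subset {b : A} (hb : IsSelfAdjoint b) :
    spectrum ℝ (b ^ 2) ⊆ Set.Icc 0 (‖b‖ ^ 2) := by
  nontriviality A
  rw [← cfc_pow_id (R := ℝ) b 2, cfc_map_spectrum ..]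
  rintro _ ⟨y, hy, rfl⟩
  have hy_le : |y| ≤ ‖b‖ := by simpa using spectrum.norm_le_norm_of_mem hy
  exact ⟨sq_nonneg y, by simpa only [sq_abs] using pow_le_pow_left₀ (abs_nonneg y) hy_le 2⟩

lemma norm_intertwiner_sub_one_le {p : A} (hp : IsStarProjection p) (q : A) :
    ‖intertwiner p q - 1‖ ≤ ‖p - q‖ := by
  nontriviality A
  rw [intertwiner_sub_one hp.isIdempotentElem, norm_sub_rev p q]
  calc ‖(2 * p - 1) * (q - p)‖ ≤ ‖2 * p - 1‖ * ‖q - p‖ := norm_mul_le _ _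
    _ = ‖q - p‖ := by rw [CStarRing.norm_of_mem_unitary hp.two_mul_sub_one_mem_unitary, one_mul]

-- Meaningful only when `spectrum ℝ a ⊆ Set.Iio 1`: elsewhere `√` and `⁻¹` take junk values.
noncomputable def invSqrtOneSub (a : A) : A := cfc (fun x : ℝ => (√(1 - x))⁻¹) a

lemma Commute.invSqrtOneSub {a b : A} (h : Commute a b) : Commute (invSqrtOneSub a) b :=
  h.cfc_real _

lemma isSelfAdjoint_invSqrtOneSub (a : A) : IsSelfAdjoint (invSqrtOneSub a) :=
  cfc_predicate _ a

lemma invSqrtOneSub_mul_self_mul_one_sub {a : A} (ha : IsSelfAdjoint a)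
    (h : spectrum ℝ a ⊆ Set.Iio 1) :
    invSqrtOneSub a * invSqrtOneSub a * (1 - a) = 1 := by
  have hcont := continuousOn_inv_sqrt_one_sub.mono h
  have h_one_sub : 1 - a = cfc (fun x : ℝ => 1 - x) a := by
    rw [cfc_sub (fun _ : ℝ => 1) (fun x => x) a, cfc_const_one ℝ a, cfc_id' ℝ a]
  rw [invSqrtOneSub, ← cfc_mul .., h_one_sub, ← cfc_mul .., ← cfc_const_one ℝ a]
  refine cfc_congr fun x hx => ?_
  have hx1 : 0 < 1 - x := sub_pos.2 (h hx)
  rw [← mul_inv, Real.mul_self_sqrt hx1.le, inv_mul_cancel₀ hx1.ne']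

lemma norm_invSqrtOneSub_le {a : A} {c : ℝ} (hc : c < 1) (hspec : spectrum ℝ a ⊆ Set.Icc 0 c) :
    ‖invSqrtOneSub a‖ ≤ (1 - c)⁻¹ :=
  norm_cfc_le (inv_nonneg.2 (sub_pos.2 hc).le) fun x hx => by
    obtain ⟨h1, h2⟩ := inv_sqrt_one_sub_mem_Icc (hspec hx).1 (hspec hx).2 hc
    rwa [Real.norm_of_nonneg (by linarith)]

lemma norm_invSqrtOneSub_sub_one_le {a : A} (ha : IsSelfAdjoint a) {c : ℝ} (hc0 : 0 ≤ c)
    (hc : c < 1) (hspec : spectrum ℝ a ⊆ Set.Icc 0 c) :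
    ‖invSqrtOneSub a - 1‖ ≤ (1 - c)⁻¹ - 1 := by
  have hcont := continuousOn_inv_sqrt_one_sub.mono fun _ hx => (hspec hx).2.trans_lt hc
  rw [invSqrtOneSub, ← cfc_const_one ℝ a, ← cfc_sub ..]
  refine norm_cfc_le (sub_nonneg.2 (one_le_inv₀ (sub_pos.2 hc) |>.2 (by linarith))) fun x hx => ?_
  obtain ⟨h1, h2⟩ := inv_sqrt_one_sub_mem_Icc (hspec hx).1 (hspec hx).2 hc
  rw [Real.norm_of_nonneg (by linarith)]
  linarith

lemma continuous_invSqrtOneSub {X : Type*} [TopologicalSpace X] {a : X → A} (ha : Continuous a)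
    (hsa : ∀ x, IsSelfAdjoint (a x)) (hspec : ∀ x, spectrum ℝ (a x) ⊆ Set.Iio 1) :
    Continuous fun x => invSqrtOneSub (a x) :=
  ha.cfc_of_mem_nhdsSet _ (isOpen_Iio.mem_nhdsSet.2 (Set.iUnion_subset hspec)) hsa
    continuousOn_inv_sqrt_one_sub

lemma IsStarProjection.spectrum_sub_sq_subset {p q : A} (hp : IsStarProjection p)
    (hq : IsStarProjection q) : spectrum ℝ ((p - q) ^ 2) ⊆ Set.Icc 0 (‖p - q‖ ^ 2) :=
  (hp.isSelfAdjoint.sub hq.isSelfAdjoint).spectrum_sq_subset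

lemma IsStarProjection.spectrum_sub_sq_subset_Iio {p q : A} (hp : IsStarProjection p)
    (hq : IsStarProjection q) (hpq : ‖p - q‖ < 1) : spectrum ℝ ((p - q) ^ 2) ⊆ Set.Iio 1 :=
  fun _ hx => (hp.spectrum_sub_sq_subset hq hx).2.trans_lt
    (pow_lt_one₀ (norm_nonneg _) hpq two_ne_zero)

noncomputable def projPartialIsometry (p q : A) : A :=
  intertwiner p q * invSqrtOneSub ((p - q) ^ 2) * q

lemma projPartialIsometry_self {p : A} (hp : IsIdempotentElem p) : projPartialIsometry p p = p := by
  simp [projPartialIsometry, intertwiner_self hp, invSqrtOneSub]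

section Near
variable {p q : A} (hp : IsStarProjection p) (hq : IsStarProjection q) (hpq : ‖p - q‖ < 1)
include hp hq hpq

lemma invSqrtOneSub_mul_self_mul_one_sub_sub_sq :
    invSqrtOneSub ((p - q) ^ 2) * invSqrtOneSub ((p - q) ^ 2) * (1 - (p - q) ^ 2) = 1 :=
  invSqrtOneSub_mul_self_mul_one_sub ((hp.isSelfAdjoint.sub hq.isSelfAdjoint).pow 2)
    (hp.spectrum_sub_sq_subset_Iio hq hpq)

lemma star_projPartialIsometry_mul_self :
    star (projPartialIsometry p q) * projPartialIsometry p q = q := by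
  set D := (p - q) ^ 2
  set E := invSqrtOneSub D
  have hE : E * E * (1 - D) = 1 := invSqrtOneSub_mul_self_mul_one_sub_sub_sq hp hq hpq
  have hEsa : star E = E := (isSelfAdjoint_invSqrtOneSub D).star_eq
  have hVV : intertwiner q p * intertwiner p q = 1 - D := by
    rw [intertwiner_mul_intertwiner hq.isIdempotentElem hp.isIdempotentElem, ← neg_sub p q, neg_sq]
  have hED : Commute E (1 - D) := ((Commute.one_left D).sub_left (Commute.refl D)).symm.invSqrtOneSub
  have hw : projPartialIsometry p q = intertwiner p q * E * q := rfl
  calc star (projPartialIsometry p q) * projPartialIsometry p q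
      = q * E * (intertwiner q p * intertwiner p q) * E * q := by
        simp only [hw, star_mul, hEsa, hq.isSelfAdjoint.star_eq,
          star_intertwiner hp.isSelfAdjoint hq.isSelfAdjoint, mul_assoc]
    _ = q * (E * E * (1 - D)) * q := by
        rw [hVV, mul_assoc (q * E), ← hED.eq]; simp only [mul_assoc]
    _ = q := by rw [hE, mul_one, hq.isIdempotentElem.eq]

lemma projPartialIsometry_mul_star_self :
    projPartialIsometry p q * star (projPartialIsometry p q) = p := by
  set D := (p - q) ^ 2
  set E := invSqrtOneSub D
  have hE : E * E * (1 - D) = 1 := invSqrtOneSub_mul_self_mul_one_sub_sub_sq hp hq hpq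
  have hEsa : star E = E := (isSelfAdjoint_invSqrtOneSub D).star_eq
  have hEq : Commute E q :=
    (commute_sub_sq_right hp.isIdempotentElem hq.isIdempotentElem).symm.invSqrtOneSub
  have hEV : Commute E (intertwiner p q) :=
    (commute_intertwiner_sub_sq hp.isIdempotentElem hq.isIdempotentElem).symm.invSqrtOneSub
  have hqV : q * intertwiner q p = intertwiner q p * p :=
    (intertwiner_mul_eq_mul_intertwiner hq.isIdempotentElem hp.isIdempotentElem).symm
  have hw : projPartialIsometry p q = intertwiner p q * E * q := rfl
  calc projPartialIsometry p q * star (projPartialIsometry p q)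
      = intertwiner p q * E * (q * q * E) * intertwiner q p := by
        simp only [hw, star_mul, hEsa, hq.isSelfAdjoint.star_eq,
          star_intertwiner hp.isSelfAdjoint hq.isSelfAdjoint, mul_assoc]
    _ = intertwiner p q * (E * E) * (q * intertwiner q p) := by
        rw [hq.isIdempotentElem.eq, ← hEq.eq]; simp only [mul_assoc]
    _ = E * E * (intertwiner p q * intertwiner q p) * p := by
        rw [hqV, ← (hEV.mul_left hEV).eq]; simp only [mul_assoc]
    _ = p := by
        rw [intertwiner_mul_intertwiner hp.isIdempotentElem hq.isIdempotentElem, hE, one_mul]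

lemma norm_projPartialIsometry_sub_le :
    ‖projPartialIsometry p q - q‖ ≤ ‖p - q‖ / (1 - ‖p - q‖) := by
  set δ := ‖p - q‖
  set E := invSqrtOneSub ((p - q) ^ 2)
  have hδ0 : 0 ≤ δ := norm_nonneg _
  have hc : δ ^ 2 < 1 := by nlinarith
  have hspec := hp.spectrum_sub_sq_subset hq
  have hE : ‖E‖ ≤ (1 - δ ^ 2)⁻¹ := norm_invSqrtOneSub_le hc hspec
  have hE1 : ‖E - 1‖ ≤ (1 - δ ^ 2)⁻¹ - 1 :=
    norm_invSqrtOneSub_sub_one_le ((hp.isSelfAdjoint.sub hq.isSelfAdjoint).pow 2) (sq_nonneg δ)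
      hc hspec
  have hV1 : ‖intertwiner p q - 1‖ ≤ δ := norm_intertwiner_sub_one_le hp q
  have hq1 : ‖q‖ ≤ 1 := hq.norm_le
  have hsplit : projPartialIsometry p q - q = ((intertwiner p q - 1) * E + (E - 1)) * q := by
    simp only [projPartialIsometry, E]; noncomm_ring
  have hbound : δ * (1 - δ ^ 2)⁻¹ + ((1 - δ ^ 2)⁻¹ - 1) = δ / (1 - δ) := by
    have h1 : 1 - δ ≠ 0 := by linarith
    have h2 : 1 + δ ≠ 0 := by linarith
    rw [show 1 - δ ^ 2 = (1 - δ) * (1 + δ) by ring]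
    field_simp
    ring
  calc ‖projPartialIsometry p q - q‖
      ≤ (‖intertwiner p q - 1‖ * ‖E‖ + ‖E - 1‖) * ‖q‖ := by
        rw [hsplit]
        refine (norm_mul_le _ _).trans (mul_le_mul_of_nonneg_right ?_ (norm_nonneg q))
        exact (norm_add_le _ _).trans (add_le_add_left (norm_mul_le _ _) _)
    _ ≤ (δ * (1 - δ ^ 2)⁻¹ + ((1 - δ ^ 2)⁻¹ - 1)) * 1 := by
        gcongr
        exact add_nonneg (mul_nonneg hδ0 (inv_nonneg.2 (by linarith))) ((norm_nonneg _).trans hE1)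
    _ = δ / (1 - δ) := by rw [mul_one, hbound]

end Near

lemma continuous_projPartialIsometry {X : Type*} [TopologicalSpace X] {p : A} {q : X → A}
    (hq : Continuous q) (hp : IsStarProjection p) (hq_proj : ∀ x, IsStarProjection (q x))
    (hpq : ∀ x, ‖p - q x‖ < 1) : Continuous fun x => projPartialIsometry p (q x) := by
  have hE : Continuous fun x => invSqrtOneSub ((p - q x) ^ 2) := by
    refine continuous_invSqrtOneSub ((continuous_const.sub hq).pow 2)
      (fun x => (hp.isSelfAdjoint.sub (hq_proj x).isSelfAdjoint).pow 2)
      fun x => hp.spectrum_sub_sq_subset_Iio (hq_proj x) (hpq x)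
  unfold projPartialIsometry intertwiner
  fun_prop

end CStarAlgebra

/-- Let `K` be a compact Hausdorff space and `q : K → M_r` (matrices realized as operators
on `ℂ^r`) a continuous projection-valued function with `‖q(s₁) − q(s₂)‖ < 1` for all
`s₁, s₂`, and `t ∈ K` a distinguished point.  Then there is a continuous `w : K → M_r`
with `w(s)*w(s) = q(s)`, `w(s)w(s)* = q(t)` for all `s`, and `w(t) = q(t)`; moreover `w`
can be chosen with `‖w(s) − q(s)‖ ≤ f(ε)` whenever `‖q(s) − q(t)‖ < ε` for all `s`, where
`f(ε) → 0` as `ε → 0`. -/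
theorem stmt17 (r : ℕ) :
    ∃ f : ℝ → ℝ, Filter.Tendsto f (nhdsWithin 0 (Set.Ioi 0)) (nhds 0) ∧
      ∀ (K : Type) [TopologicalSpace K] [CompactSpace K] [T2Space K]
        (q : K → (EuclideanSpace ℂ (Fin r) →L[ℂ] EuclideanSpace ℂ (Fin r))) (t : K),
        Continuous q →
        (∀ s, q s * q s = q s) → (∀ s, star (q s) = q s) →
        (∀ s₁ s₂, ‖q s₁ - q s₂‖ < 1) →
        ∃ w : K → (EuclideanSpace ℂ (Fin r) →L[ℂ] EuclideanSpace ℂ (Fin r)),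
          Continuous w ∧ (∀ s, star (w s) * w s = q s) ∧
          (∀ s, w s * star (w s) = q t) ∧ w t = q t ∧
          ∀ ε : ℝ, 0 < ε → ε < 1 → (∀ s, ‖q s - q t‖ < ε) →
            ∀ s, ‖w s - q s‖ ≤ f ε := by
  refine ⟨fun ε => ε / (1 - ε), ?_, ?_⟩
  · have hcont : ContinuousAt (fun ε : ℝ => ε / (1 - ε)) 0 :=
      continuousAt_id.div (continuousAt_const.sub continuousAt_id) (by norm_num)
    simpa using hcont.tendsto.mono_left nhdsWithin_le_nhds
  intro K _ _ _ q t hq hidem hsa hlt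
  have hproj : ∀ s, IsStarProjection (q s) := fun s => ⟨hidem s, hsa s⟩
  have hnear : ∀ s, ‖q t - q s‖ < 1 := hlt t
  refine ⟨fun s => projPartialIsometry (q t) (q s),
    continuous_projPartialIsometry hq (hproj t) hproj hnear,
    fun s => star_projPartialIsometry_mul_self (hproj t) (hproj s) (hnear s),
    fun s => projPartialIsometry_mul_star_self (hproj t) (hproj s) (hnear s),
    projPartialIsometry_self (hidem t), fun ε _ hε1 hε s => ?_⟩
  have hδε : ‖q t - q s‖ ≤ ε := (norm_sub_rev (q t) (q s) ▸ hε s).le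
  calc ‖projPartialIsometry (q t) (q s) - q s‖ ≤ ‖q t - q s‖ / (1 - ‖q t - q s‖) :=
        norm_projPartialIsometry_sub_le (hproj t) (hproj s) (hnear s)
    _ ≤ ε / (1 - ε) := by gcongr
end
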